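/- Let K = ℚ(i) and let m, n ∈ ℤ[i] be nonzero with m² ≠ n², such that m² − n² is a square in ℤ[i]. Then the Mordell–Weil group E(K) of the elliptic curve E over K given by y² = x(x + m²)(x + n²) contains a subgroup isomorphic to ℤ/4ℤ ⊕ ℤ/4ℤ. -/

import Mathlib

open WeierstrassCurve.Affine

/-! A point `(e₁, 0)` of order 2 on `y² = (x - e₁)(x - e₂)(x - e₃)` is twice a point over the
base field as soon as `e₁ - e₂ = s²` and `e₁ - e₃ = t²`: the tangent at `R = (e₁ + st, st(s + t))`
has slope `s + t` and meets the curve again at `(e₁, 0)`, so `2R = (e₁, 0)`. On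
`y² = x(x + m²)(x + n²)` this halves `(0, 0)` with `s = m`, `t = n`, and `(-m², 0)` with `s = im`,
`t = ir`, where `r² = m² - n²`. Two points of order 4 whose doubles are distinct points of order 2
generate `ℤ/4ℤ × ℤ/4ℤ`. -/

theorem addOrderOf_eq_four_of_addOrderOf_two_nsmul {G : Type*} [AddMonoid G] {x : G}
    (h : addOrderOf (2 • x) = 2) : addOrderOf x = 4 := by
  have h2 : ¬ 2 ^ 1 • x = 0 := by
    rw [pow_one]; intro h0; rw [h0, addOrderOf_zero] at h; exact absurd h (by decide)
  have h4 := addOrderOf_nsmul_eq_zero (2 • x)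
  rw [h] at h4
  exact addOrderOf_eq_prime_pow h2 (by rwa [pow_succ, pow_one, mul_nsmul])

section OrderFour

variable {G : Type*} [AddCommGroup G]

theorem zsmul_eq_emod_two_zsmul {T : G} (hT : addOrderOf T = 2) (c : ℤ) :
    c • T = (c % 2) • T := by
  rw [← mod_addOrderOf_zsmul, hT, Nat.cast_ofNat]

theorem two_dvd_of_zsmul_add_zsmul_eq_zero {T₀ T₁ : G} (h₀ : addOrderOf T₀ = 2)
    (h₁ : addOrderOf T₁ = 2) (hne : T₀ ≠ T₁) {a b : ℤ} (h : a • T₀ + b • T₁ = 0) :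
    2 ∣ a ∧ 2 ∣ b := by
  have hT₀ : T₀ ≠ 0 := by rintro rfl; simp at h₀
  have hT₁ : T₁ ≠ 0 := by rintro rfl; simp at h₁
  rw [zsmul_eq_emod_two_zsmul h₀, zsmul_eq_emod_two_zsmul h₁] at h
  rcases Int.emod_two_eq_zero_or_one a with ha | ha <;>
    rcases Int.emod_two_eq_zero_or_one b with hb | hb <;>
    simp only [ha, hb, zero_zsmul, one_zsmul, add_zero, zero_add] at h
  · exact ⟨Int.dvd_of_emod_eq_zero ha, Int.dvd_of_emod_eq_zero hb⟩
  · exact absurd h hT₁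
  · exact absurd h hT₀
  · refine absurd (add_right_cancel (h.trans ?_)) hne
    rw [← two_nsmul, ← h₁, addOrderOf_nsmul_eq_zero]

theorem four_dvd_of_zsmul_add_zsmul_eq_zero {P Q : G} (hP : addOrderOf P = 4)
    (hQ : addOrderOf Q = 4) (hPQ : 2 • P ≠ 2 • Q) {a b : ℤ} (h : a • P + b • Q = 0) :
    4 ∣ a ∧ 4 ∣ b := by
  have order_two : ∀ {x : G}, addOrderOf x = 4 → addOrderOf (2 • x) = 2 := fun hx => by
    rw [addOrderOf_nsmul_of_dvd two_ne_zero (by rw [hx]; norm_num), hx]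
  have halve : ∀ c d : ℤ, (2 * c) • P + (2 * d) • Q = c • (2 • P) + d • (2 • Q) := by
    intro c d; simp only [mul_comm (2 : ℤ), mul_zsmul]; norm_cast
  obtain ⟨⟨a, rfl⟩, ⟨b, rfl⟩⟩ :=
    two_dvd_of_zsmul_add_zsmul_eq_zero (order_two hP) (order_two hQ) hPQ <| by
      rw [smul_comm a, smul_comm b, ← smul_add, h, smul_zero]
  rw [halve] at h
  obtain ⟨ha, hb⟩ := two_dvd_of_zsmul_add_zsmul_eq_zero (order_two hP) (order_two hQ) hPQ h
  exact ⟨mul_dvd_mul_left 2 ha, mul_dvd_mul_left 2 hb⟩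

theorem exists_addSubgroup_addEquiv_zmod_four_prod {P Q : G} (hP : addOrderOf P = 4)
    (hQ : addOrderOf Q = 4) (hPQ : 2 • P ≠ 2 • Q) :
    ∃ H : AddSubgroup G, Nonempty (H ≃+ ZMod 4 × ZMod 4) := by
  have zmultiplesHom_four : ∀ {x : G}, addOrderOf x = 4 → zmultiplesHom G x (4 : ℕ) = 0 :=
    fun hx => by
      rw [zmultiplesHom_apply, natCast_zsmul, ← hx, addOrderOf_nsmul_eq_zero]
  let f : ZMod 4 × ZMod 4 →+ G :=
    (ZMod.lift 4 ⟨_, zmultiplesHom_four hP⟩).coprod (ZMod.lift 4 ⟨_, zmultiplesHom_four hQ⟩)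
  have hf : Function.Injective f := by
    refine (injective_iff_map_eq_zero f).2 ?_
    rintro ⟨a, b⟩ hab
    obtain ⟨a, rfl⟩ := ZMod.intCast_surjective a
    obtain ⟨b, rfl⟩ := ZMod.intCast_surjective b
    simp only [f, AddMonoidHom.coprod_apply, ZMod.lift_coe, zmultiplesHom_apply] at hab
    simpa only [Prod.mk_eq_zero, ZMod.intCast_zmod_eq_zero_iff_dvd, Nat.cast_ofNat] using
      four_dvd_of_zsmul_add_zsmul_eq_zero hP hQ hPQ hab
  exact ⟨f.range, ⟨(AddMonoidHom.ofInjective hf).symm⟩⟩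

end OrderFour

namespace WeierstrassCurve

variable {F : Type*} [Field F]

/-- `W` is the curve `y² = (x - e₁)(x - e₂)(x - e₃)`. -/
structure SplitsAs (W : WeierstrassCurve F) (e₁ e₂ e₃ : F) : Prop where
  a₁_eq : W.a₁ = 0
  a₂_eq : W.a₂ = -(e₁ + e₂ + e₃)
  a₃_eq : W.a₃ = 0
  a₄_eq : W.a₄ = e₁ * e₂ + e₁ * e₃ + e₂ * e₃
  a₆_eq : W.a₆ = -(e₁ * e₂ * e₃)

theorem Affine.Point.addOrderOf_some_of_Y_eq [DecidableEq F] {W : Affine F} {x y : F}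
    {h : W.Nonsingular x y} (hy : y = W.negY x y) : addOrderOf (Point.some _ _ h) = 2 :=
  addOrderOf_eq_prime (by rw [two_nsmul, Point.add_self_of_Y_eq hy]) (Point.some_ne_zero h)

namespace SplitsAs

variable {W : WeierstrassCurve F} {e₁ e₂ e₃ : F}

theorem equation_iff (h : W.SplitsAs e₁ e₂ e₃) {x y : F} :
    W.toAffine.Equation x y ↔ y ^ 2 = (x - e₁) * (x - e₂) * (x - e₃) := by
  rw [equation_iff', h.a₁_eq, h.a₂_eq, h.a₃_eq, h.a₄_eq, h.a₆_eq, sub_eq_zero]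
  ring_nf

theorem nonsingular_root (h : W.SplitsAs e₁ e₂ e₃) (h₁₂ : e₁ ≠ e₂) (h₁₃ : e₁ ≠ e₃) :
    W.toAffine.Nonsingular e₁ 0 := by
  refine (nonsingular_iff' _ _).2 ⟨h.equation_iff.2 (by ring), Or.inl ?_⟩
  rw [h.a₁_eq, h.a₂_eq, h.a₄_eq]
  intro h0
  exact mul_ne_zero (sub_ne_zero.2 h₁₂) (sub_ne_zero.2 h₁₃) (by linear_combination -h0)

variable {s t : F}

theorem nonsingular_half_root (h : W.SplitsAs e₁ e₂ e₃) (hs : s ^ 2 = e₁ - e₂)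
    (ht : t ^ 2 = e₁ - e₃) (hy : 2 * (s * t * (s + t)) ≠ 0) :
    W.toAffine.Nonsingular (e₁ + s * t) (s * t * (s + t)) := by
  refine (nonsingular_iff' _ _).2 ⟨h.equation_iff.2 ?_, Or.inr ?_⟩
  · linear_combination (s * t * (s * t + (e₁ - e₃))) * hs + (s * t * (s * t + s ^ 2)) * ht
  · rwa [h.a₁_eq, h.a₃_eq, zero_mul, add_zero, add_zero]

theorem two_nsmul_half_root [DecidableEq F] (h : W.SplitsAs e₁ e₂ e₃) (hs : s ^ 2 = e₁ - e₂)
    (ht : t ^ 2 = e₁ - e₃) (hy : 2 * (s * t * (s + t)) ≠ 0)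
    (hR : W.toAffine.Nonsingular (e₁ + s * t) (s * t * (s + t)))
    (hT : W.toAffine.Nonsingular e₁ 0) :
    2 • Point.some _ _ hR = Point.some _ _ hT := by
  have hneg : W.toAffine.negY (e₁ + s * t) (s * t * (s + t)) = -(s * t * (s + t)) := by
    rw [negY, h.a₁_eq, h.a₃_eq]; ring
  have hy' : s * t * (s + t) ≠ W.toAffine.negY (e₁ + s * t) (s * t * (s + t)) := by
    rw [hneg]; intro h'; exact hy (by linear_combination h')
  have hslope : W.toAffine.slope (e₁ + s * t) (e₁ + s * t) (s * t * (s + t)) (s * t * (s + t))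
      = s + t := by
    rw [slope_of_Y_ne rfl hy', div_eq_iff (sub_ne_zero.2 hy'), hneg, h.a₁_eq, h.a₂_eq, h.a₄_eq]
    linear_combination (-2 * (s * t) - (e₁ - e₃)) * hs + (-2 * (s * t) - s ^ 2) * ht
  rw [two_nsmul, Point.add_self_of_Y_ne hy', Point.some.injEq, hslope]
  constructor
  · rw [addX, h.a₁_eq, h.a₂_eq]; linear_combination hs + ht
  · rw [addY, negAddY, addX, negY, h.a₁_eq, h.a₂_eq, h.a₃_eq]
    linear_combination (-(s + t)) * (hs + ht)

theorem exists_addOrderOf_eq_four [DecidableEq F] (h : W.SplitsAs e₁ e₂ e₃)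
    (hs : s ^ 2 = e₁ - e₂) (ht : t ^ 2 = e₁ - e₃) (hy : 2 * (s * t * (s + t)) ≠ 0)
    (hT : W.toAffine.Nonsingular e₁ 0) :
    ∃ P : W.toAffine.Point, addOrderOf P = 4 ∧ 2 • P = Point.some _ _ hT := by
  have hP := h.two_nsmul_half_root hs ht hy (h.nonsingular_half_root hs ht hy) hT
  have hT2 : addOrderOf (Point.some _ _ hT) = 2 :=
    Point.addOrderOf_some_of_Y_eq (by rw [negY, h.a₁_eq, h.a₃_eq]; ring)
  exact ⟨_, addOrderOf_eq_four_of_addOrderOf_two_nsmul (hP ▸ hT2), hP⟩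

end SplitsAs

end WeierstrassCurve

open Classical in
theorem Z4xZ4_subgroup_over_Q_i_general
    (K : Type*) [Field K] [NumberField K]
    (i : K) (hi : i ^ 2 = -1)
    (m n : K)
    (hm0 : m ≠ 0) (hn0 : n ≠ 0) (hmn : m ^ 2 ≠ n ^ 2)
    (hsq : ∃ r ∈ Subring.closure ({i} : Set K), r ^ 2 = m ^ 2 - n ^ 2) :
    ∃ H : AddSubgroup (⟨0, m ^ 2 + n ^ 2, 0, m ^ 2 * n ^ 2, 0⟩ :
        WeierstrassCurve K).toAffine.Point,
      Nonempty (H ≃+ (ZMod 4 × ZMod 4)) := by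
  obtain ⟨r, -, hr⟩ := hsq
  set E : WeierstrassCurve K := ⟨0, m ^ 2 + n ^ 2, 0, m ^ 2 * n ^ 2, 0⟩
  have hE₀ : E.SplitsAs 0 (-m ^ 2) (-n ^ 2) := ⟨rfl, by ring, rfl, by ring, by ring⟩
  have hE₁ : E.SplitsAs (-m ^ 2) 0 (-n ^ 2) := ⟨rfl, by ring, rfl, by ring, by ring⟩
  have hm2 : m ^ 2 ≠ 0 := pow_ne_zero 2 hm0
  have hT₀ := hE₀.nonsingular_root (by simpa using hm0) (by simpa using hn0)
  have hT₁ := hE₁.nonsingular_root (by simpa using hm2) (by simpa using hmn)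
  have hmn' : m + n ≠ 0 := fun h => hmn (by linear_combination (m - n) * h)
  have hr0 : r ≠ 0 := by rintro rfl; exact hmn (by linear_combination -hr)
  have hmr : m + r ≠ 0 := fun h => hn0 (pow_eq_zero_iff two_ne_zero |>.1 <| by
    linear_combination hr + (m - r) * h)
  have hi0 : i ≠ 0 := by rintro rfl; norm_num at hi
  obtain ⟨P, hP, hP2⟩ := hE₀.exists_addOrderOf_eq_four (s := m) (t := n) (by ring) (by ring)
    (by simp [hm0, hn0, hmn']) hT₀
  obtain ⟨Q, hQ, hQ2⟩ := hE₁.exists_addOrderOf_eq_four (s := i * m) (t := i * r)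
    (by linear_combination m ^ 2 * hi) (by linear_combination r ^ 2 * hi - hr)
    (by simp [← mul_add, hi0, hm0, hr0, hmr]) hT₁
  refine exists_addSubgroup_addEquiv_zmod_four_prod hP hQ ?_
  rw [hP2, hQ2, Ne, Point.some.injEq]
  exact fun h => hm2 (by linear_combination h.1)

open Classical in
/-- Let `K = ℚ(i)` and let `m, n ∈ ℤ[i]` (the subring of `K` generated by `i`) be nonzero with
`m² ≠ n²`, such that `m² − n²` is a square in `ℤ[i]`. Then the Mordell–Weil group of the elliptic
curve `y² = x(x + m²)(x + n²)` over `K` contains a subgroup isomorphic to `ℤ/4ℤ ⊕ ℤ/4ℤ`. -/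
theorem Z4xZ4_subgroup_over_Q_i
    (K : Type*) [Field K] [NumberField K]
    (hdeg : Module.finrank ℚ K = 2) (i : K) (hi : i ^ 2 = -1)
    (m n : K) (hm : m ∈ Subring.closure ({i} : Set K))
    (hn : n ∈ Subring.closure ({i} : Set K))
    (hm0 : m ≠ 0) (hn0 : n ≠ 0) (hmn : m ^ 2 ≠ n ^ 2)
    (hsq : ∃ r ∈ Subring.closure ({i} : Set K), r ^ 2 = m ^ 2 - n ^ 2) :
    ∃ H : AddSubgroup (⟨0, m ^ 2 + n ^ 2, 0, m ^ 2 * n ^ 2, 0⟩ :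
        WeierstrassCurve K).toAffine.Point,
      Nonempty (H ≃+ (ZMod 4 × ZMod 4)) :=
  Z4xZ4_subgroup_over_Q_i_general K i hi m n hm0 hn0 hmn hsq
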